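/- Let G = H □_{F₁,…,F_t} K₂^{□t} and let (G,p,ℓ) be a point-hyperplane framework in ℝ^d with t-fold extrusion symmetry. Suppose there is no edge {i,j} ∈ E_PH for which the hyperplane corresponding to j contains an extrusion direction. Then there exist non-singular matrices A and B such that Bᵀ R(G,p,ℓ) A is block-diagonal with r = 2^t blocks R̃₀(G,p,ℓ),…,R̃_{r−1}(G,p,ℓ), where the block R̃_i(G,p,ℓ) corresponds to the i-th irreducible representation of ℤ₂^t. -/

import Mathlib

/-!
STATEMENT 5: Let `G = H □_{F₁,…,F_t} K₂^{□t}` and let `(G,p,ℓ)` be a point-hyperplane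
framework in `ℝ^d` with `t`-fold extrusion symmetry, with no `E_PH` edge whose
hyperplane endpoint contains an extrusion direction.  Then the point-hyperplane
rigidity matrix block-decomposes: there exist non-singular coordinate changes realising
a block-diagonal form with `2^t` blocks, one for each irreducible representation of
`ℤ₂^t`.  Equivalently (as for Corollary 2.4), the configuration space and the row space
decompose as direct sums of invariant subspaces `X^{(ρ_χ)}` and `Y^{(ρ_χ)}` indexed by
the irreducible representations `ρ_χ` of `ℤ₂^t` (the corresponding action being
multiplication by `ρ_χ(γ)` on each), and the rigidity matrix maps `X^{(ρ_χ)}` into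
`Y^{(ρ_χ)}`.
-/

open Matrix
open scoped Classical

/-- The group `ℤ₂^t`. -/
abbrev Zkt (t : ℕ) := Fin t → ZMod 2

/-- Configuration space of a point-hyperplane framework in `ℝ^d`. -/
abbrev PHCfg (d : ℕ) (VP VH : Type*) := (VP → Fin d → ℝ) × (VH → (Fin d → ℝ) × ℝ)

/-- Point vertices of `G = H □_{F₁,…,F_t} K₂^{□t}`: pairs `(v, 𝐞)` with `v` a point
vertex of `H` and `𝐞 ∈ {0,1}^t`. -/
abbrev VPt (VPH : Type*) (t : ℕ) := VPH × Zkt t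

/-- Hyperplane vertices of `G = H □_{F₁,…,F_t} K₂^{□t}`: pairs `(w, 𝐞)`, where the
coordinates `h` of `𝐞` with `w ∈ F_h` are "starred" (immaterial: all notions below are
invariant under changing them, which models the contraction of such pairs). -/
abbrev VHt (VHH : Type*) (t : ℕ) := VHH × Zkt t

/-- The extrusion action on point vertices. -/
def thetaP {VPH : Type*} {t : ℕ} (γ : Zkt t) (i : VPt VPH t) : VPt VPH t := (i.1, i.2 + γ)

/-- The extrusion action on hyperplane vertices (`⋆ + 0 = ⋆ + 1 = ⋆` is modelled by
invariance under the starred coordinates). -/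
def thetaH {VHH : Type*} {t : ℕ} (γ : Zkt t) (j : VHt VHH t) : VHt VHH t := (j.1, j.2 + γ)

/-- Coefficient of `τ_h` in the extrusion direction induced by `γ` at level `e`:
`+1` if `e_h = 0, γ_h = 1`; `-1` if `e_h = 1, γ_h = 1`; `0` if `γ_h = 0`. -/
noncomputable def coef (e g : ZMod 2) : ℝ := (1 - 2 * (e.val : ℝ)) * ((g.val : ℝ))

/-- The extrusion direction `τ_γ(i)` of a point vertex `i` induced by `γ`. -/
noncomputable def tauP {VPH : Type*} {t d : ℕ} (τ : Fin t → Fin d → ℝ) (γ : Zkt t)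
    (i : VPt VPH t) : Fin d → ℝ :=
  ∑ h, coef (i.2 h) (γ h) • τ h

/-- The extrusion direction `τ_γ(j)` of a hyperplane vertex `j` induced by `γ`
(starred coordinates, i.e. those `h` with `j ∈ F_h`, contribute nothing). -/
noncomputable def tauH {VHH : Type*} {t d : ℕ} (F : Fin t → VHH → Prop)
    (τ : Fin t → Fin d → ℝ) (γ : Zkt t) (j : VHt VHH t) : Fin d → ℝ :=
  ∑ h, if F h j.1 then 0 else coef (j.2 h) (γ h) • τ h

/-- Definition 3.1: `t`-fold extrusion symmetry of a point-hyperplane framework on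
`G = H □_{F₁,…,F_t} K₂^{□t}` with extrusion directions `τ₁,…,τ_t ∈ ℝ^d \ {0}`:
(i) points are translated by the induced extrusion directions, (ii) hyperplane normals
are preserved, (iii) `τ_h` lies in the hyperplane of `(w,𝐞)` iff `w ∈ F_h`,
(iv) the offsets transform by `r_{θ(γ)j} = r_j + ⟨a_j, τ_γ(j)⟩`. -/
def PHExtrusion {VPH VHH : Type*} {t d : ℕ} (F : Fin t → VHH → Prop)
    (τ : Fin t → Fin d → ℝ) (c : PHCfg d (VPt VPH t) (VHt VHH t)) : Prop :=
  (∀ h, τ h ≠ 0) ∧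
  (∀ (γ : Zkt t) (i : VPt VPH t), c.1 (thetaP γ i) = c.1 i + tauP τ γ i) ∧
  (∀ (γ : Zkt t) (j : VHt VHH t), (c.2 (thetaH γ j)).1 = (c.2 j).1) ∧
  (∀ (j : VHt VHH t) (h : Fin t), τ h ⬝ᵥ (c.2 j).1 = 0 ↔ F h j.1) ∧
  (∀ (γ : Zkt t) (j : VHt VHH t),
    (c.2 (thetaH γ j)).2 = (c.2 j).2 + (c.2 j).1 ⬝ᵥ tauH F τ γ j)

/-- Point-point adjacency in `G`. -/
def AdjPP {VPH : Type*} {t : ℕ} (hPP : VPH → VPH → Prop) (i j : VPt VPH t) : Prop :=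
  (hPP i.1 j.1 ∧ i.2 = j.2) ∨
    (i.1 = j.1 ∧ ∃ h, i.2 h ≠ j.2 h ∧ ∀ h', h' ≠ h → i.2 h' = j.2 h')

/-- Point-hyperplane adjacency in `G`: the levels must agree on all non-starred
coordinates of the hyperplane vertex. -/
def AdjPH {VPH VHH : Type*} {t : ℕ} (F : Fin t → VHH → Prop)
    (hPH : VPH → VHH → Prop) (i : VPt VPH t) (j : VHt VHH t) : Prop :=
  hPH i.1 j.1 ∧ ∀ h, ¬ F h j.1 → i.2 h = j.2 h

/-- Hyperplane-hyperplane (non-parallel, i.e. angle-constraint) adjacency in `G`,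
inherited from the edges of `H`: the levels must agree on coordinates that are
non-starred for both endpoints. -/
def AdjHHn {VHH : Type*} {t : ℕ} (F : Fin t → VHH → Prop)
    (hHH : VHH → VHH → Prop) (j k : VHt VHH t) : Prop :=
  hHH j.1 k.1 ∧ ∀ h, ¬ F h j.1 → ¬ F h k.1 → j.2 h = k.2 h

/-- Hyperplane-hyperplane parallel adjacency in `G`: two copies of the same hyperplane
vertex of `H` whose levels differ in exactly one non-starred coordinate. -/
def AdjHHp {VHH : Type*} {t : ℕ} (F : Fin t → VHH → Prop) (j k : VHt VHH t) : Prop :=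
  j.1 = k.1 ∧ ∃ h, ¬ F h j.1 ∧ j.2 h ≠ k.2 h ∧ ∀ h', h' ≠ h → j.2 h' = k.2 h'

/-- The external representation `P′_V = (P_{V_P} ⊗ I_d) ⊕ P′_{V_H}` of `ℤ₂^t` acting on
the configuration space: point velocities are permuted, and for a hyperplane vertex `j`
the block `[[I_d, 0], [−τ_γ(j)ᵀ, 1]]` is applied to the permuted `(ȧ, ṙ)`. -/
noncomputable def extActP {VPH VHH : Type*} {t d : ℕ} (F : Fin t → VHH → Prop)
    (τ : Fin t → Fin d → ℝ) (γ : Zkt t) (q : PHCfg d (VPt VPH t) (VHt VHH t)) :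
    PHCfg d (VPt VPH t) (VHt VHH t) :=
  (fun i => q.1 (thetaP γ i),
   fun j => ((q.2 (thetaH γ j)).1,
     (q.2 (thetaH γ j)).2 - tauH F τ γ j ⬝ᵥ (q.2 (thetaH γ j)).1))

/-- The orientation sign of a level entry: `+1` for `0` and `-1` for `1`. -/
noncomputable def sgn (e : ZMod 2) : ℝ := 1 - 2 * (e.val : ℝ)

/-- Row indices of the point-hyperplane rigidity matrix of `G`:
point-point rows, point-hyperplane rows, hyperplane-hyperplane angle rows,
`d−1` rows per parallel-constraint edge, and one normalisation row per hyperplane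
vertex. -/
abbrev PRow (VP VH : Type*) (d : ℕ) :=
  (VP × VP) ⊕ (VP × VH) ⊕ (VH × VH) ⊕ ((VH × VH) × Fin (d - 1)) ⊕ VH

/-- The point-hyperplane rigidity matrix of the extrusion-symmetric framework, applied
to a candidate infinitesimal motion `q`.  The `d−1` rows of a parallel-constraint edge
`{j,k}` (in direction `h`, with vectors `alph j.1 h m` as in Section 3.2) carry `(α,0)`
in the columns of the endpoint whose `h`-th level entry is `0` and `(−α,0)` in the
columns of the other endpoint. -/
noncomputable def phRigX {VPH VHH : Type*} {t d : ℕ} (F : Fin t → VHH → Prop)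
    (hPP : VPH → VPH → Prop) (hPH : VPH → VHH → Prop) (hHH : VHH → VHH → Prop)
    (alph : VHH → Fin t → Fin (d - 1) → Fin d → ℝ)
    (c q : PHCfg d (VPt VPH t) (VHt VHH t)) :
    PRow (VPt VPH t) (VHt VHH t) d → ℝ
  | Sum.inl (i, j) =>
      if AdjPP hPP i j then (c.1 i - c.1 j) ⬝ᵥ (q.1 i - q.1 j) else 0
  | Sum.inr (Sum.inl (i, j)) =>
      if AdjPH F hPH i j then
        c.1 i ⬝ᵥ (q.2 j).1 + q.1 i ⬝ᵥ (c.2 j).1 - (q.2 j).2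
      else 0
  | Sum.inr (Sum.inr (Sum.inl (j, k))) =>
      if AdjHHn F hHH j k then
        (c.2 j).1 ⬝ᵥ (q.2 k).1 + (q.2 j).1 ⬝ᵥ (c.2 k).1
      else 0
  | Sum.inr (Sum.inr (Sum.inr (Sum.inl ((j, k), m)))) =>
      if AdjHHp F j k then
        ∑ h, (if ¬ F h j.1 ∧ j.2 h ≠ k.2 h then
            sgn (j.2 h) * (alph j.1 h m ⬝ᵥ (q.2 j).1)
              + sgn (k.2 h) * (alph j.1 h m ⬝ᵥ (q.2 k).1)
          else 0)
      else 0
  | Sum.inr (Sum.inr (Sum.inr (Sum.inr j))) => (c.2 j).1 ⬝ᵥ (q.2 j).1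

/-- The sign of the internal representation attached to a pair of levels `e, e'`:
`-1` exactly when the two levels differ in a single coordinate `h` and `γ_h = 1`. -/
noncomputable def intSign {t : ℕ} (γ : Zkt t) (e e' : Zkt t) : ℝ :=
  ∏ h, (-1 : ℝ) ^ ((e h + e' h).val * (γ h).val)

/-- The permutation of the rows induced by `γ` (acting on each vertex index). -/
def rowMap {VPH VHH : Type*} {t d : ℕ} (γ : Zkt t) :
    PRow (VPt VPH t) (VHt VHH t) d → PRow (VPt VPH t) (VHt VHH t) d
  | Sum.inl (i, j) => Sum.inl (thetaP γ i, thetaP γ j)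
  | Sum.inr (Sum.inl (i, j)) => Sum.inr (Sum.inl (thetaP γ i, thetaH γ j))
  | Sum.inr (Sum.inr (Sum.inl (j, k))) =>
      Sum.inr (Sum.inr (Sum.inl (thetaH γ j, thetaH γ k)))
  | Sum.inr (Sum.inr (Sum.inr (Sum.inl ((j, k), m)))) =>
      Sum.inr (Sum.inr (Sum.inr (Sum.inl ((thetaH γ j, thetaH γ k), m))))
  | Sum.inr (Sum.inr (Sum.inr (Sum.inr j))) =>
      Sum.inr (Sum.inr (Sum.inr (Sum.inr (thetaH γ j))))

/-- The sign of the internal representation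
`P′_E = P′_{E_PP} ⊕ P_{E_PH} ⊕ P_{E_HH∦} ⊕ (P′_{E_HH∥} ⊗ I_{d−1}) ⊕ P_{V_H}` on each
row: the signed edge permutation sign on point-point and parallel rows, `+1` on the
point-hyperplane, angle and normalisation rows. -/
noncomputable def rowSign {VPH VHH : Type*} {t d : ℕ} (γ : Zkt t) :
    PRow (VPt VPH t) (VHt VHH t) d → ℝ
  | Sum.inl (i, j) => intSign γ i.2 j.2
  | Sum.inr (Sum.inl _) => 1
  | Sum.inr (Sum.inr (Sum.inl _)) => 1
  | Sum.inr (Sum.inr (Sum.inr (Sum.inl ((j, k), _)))) => intSign γ j.2 k.2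
  | Sum.inr (Sum.inr (Sum.inr (Sum.inr _))) => 1

/-- The irreducible representation `ρ_χ` of `ℤ₂^t` indexed by `χ`. -/
noncomputable def chi {t : ℕ} (χ γ : Zkt t) : ℝ :=
  (-1 : ℝ) ^ (∑ h, (χ h).val * (γ h).val)

/-! ### Auxiliary lemmas: `ZMod 2` arithmetic -/

lemma zmod2_cases (e : ZMod 2) : e = 0 ∨ e = 1 := by revert e; decide

lemma zmod2_val_zero : (0 : ZMod 2).val = 0 := rfl
lemma zmod2_val_one : (1 : ZMod 2).val = 1 := rfl
lemma zmod2_add_self (a : ZMod 2) : a + a = 0 := by revert a; decide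
lemma zmod2_shift (a b c : ZMod 2) : a + c + (b + c) = a + b := by revert a b c; decide
lemma zmod2_val_two : (2 : ZMod 2).val = 0 := rfl
lemma zmod2_ne_sum {a b : ZMod 2} (h : a ≠ b) : a + b = 1 := by revert a b; decide
lemma zmod2_ne_eq_add_one {a b : ZMod 2} (h : a ≠ b) : b = a + 1 := by revert a b; decide
lemma zmod2_add_add {t : ℕ} (γ β : Zkt t) : γ + (γ + β) = β := by
  rw [← add_assoc]
  have : γ + γ = 0 := funext fun h => zmod2_add_self _
  rw [this, zero_add]
lemma zmod2_eq_of_add_eq_zero {t : ℕ} {χ ψ : Zkt t} (h : χ + ψ = 0) : χ = ψ := by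
  funext x
  have := congrFun h x
  revert this
  have := zmod2_cases (χ x); have := zmod2_cases (ψ x)
  rcases ‹χ x = 0 ∨ χ x = 1› with h1 | h1 <;> rcases ‹ψ x = 0 ∨ ψ x = 1› with h2 | h2 <;>
    simp [h1, h2]

/-! ### Character lemmas -/

lemma chi_eq_prod {t : ℕ} (χ γ : Zkt t) :
    chi χ γ = ∏ h, (-1 : ℝ) ^ ((χ h).val * (γ h).val) := by
  rw [chi, Finset.prod_pow_eq_pow_sum]

lemma chi_zero_left {t : ℕ} (γ : Zkt t) : chi 0 γ = 1 := by
  simp [chi, zmod2_val_zero]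

lemma chi_zero_right {t : ℕ} (χ : Zkt t) : chi χ 0 = 1 := by
  simp [chi, zmod2_val_zero]

lemma chi_comm {t : ℕ} (χ γ : Zkt t) : chi χ γ = chi γ χ := by
  simp [chi, Nat.mul_comm]

lemma neg_one_pow_add2 (a b c : ZMod 2) :
    (-1 : ℝ) ^ (a.val * (b + c).val) = (-1 : ℝ) ^ (a.val * b.val) * (-1 : ℝ) ^ (a.val * c.val) := by
  rcases zmod2_cases a with rfl | rfl <;> rcases zmod2_cases b with rfl | rfl <;>
    rcases zmod2_cases c with rfl | rfl <;> norm_num [zmod2_val_zero, zmod2_val_one, zmod2_val_two]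

lemma chi_add_right {t : ℕ} (χ γ γ' : Zkt t) : chi χ (γ + γ') = chi χ γ * chi χ γ' := by
  rw [chi_eq_prod, chi_eq_prod, chi_eq_prod, ← Finset.prod_mul_distrib]
  exact Finset.prod_congr rfl fun h _ => neg_one_pow_add2 _ _ _

lemma chi_add_left {t : ℕ} (χ ψ γ : Zkt t) : chi (χ + ψ) γ = chi χ γ * chi ψ γ := by
  rw [chi_comm, chi_add_right, chi_comm γ χ, chi_comm γ ψ]

lemma chi_mul_self {t : ℕ} (χ γ : Zkt t) : chi χ γ * chi χ γ = 1 := by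
  rw [← chi_add_right]
  have : γ + γ = (0 : Zkt t) := funext fun h => zmod2_add_self _
  rw [this, chi_zero_right]

lemma card_zkt (t : ℕ) : Fintype.card (Zkt t) = 2 ^ t := by
  simp [Zkt]

lemma sum_chi_ne {t : ℕ} (ψ : Zkt t) (hψ : ψ ≠ 0) : ∑ γ : Zkt t, chi ψ γ = 0 := by
  obtain ⟨h₀, hh₀⟩ : ∃ h, ψ h ≠ 0 := by
    by_contra h; push_neg at h; exact hψ (funext h)
  have hψ1 : ψ h₀ = 1 := (zmod2_cases _).resolve_left hh₀
  set δ : Zkt t := fun h => if h = h₀ then 1 else 0 with hδ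
  have hchiδ : chi ψ δ = -1 := by
    rw [chi_eq_prod, Finset.prod_eq_single h₀]
    · simp [hδ, hψ1, zmod2_val_one]
    · intro h _ hne; simp [hδ, hne, zmod2_val_zero]
    · simp
  have key : ∑ γ : Zkt t, chi ψ (δ + γ) = ∑ γ : Zkt t, chi ψ γ :=
    Fintype.sum_equiv (Equiv.addLeft δ) _ _ fun γ => rfl
  have h2 : ∑ γ : Zkt t, chi ψ (δ + γ) = -∑ γ : Zkt t, chi ψ γ := by
    simp_rw [chi_add_right, hchiδ, neg_one_mul]
    exact Finset.sum_neg_distrib (s := Finset.univ) (f := fun γ : Zkt t => chi ψ γ)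
  have := key.symm.trans h2
  linarith

lemma sum_chi {t : ℕ} (ψ : Zkt t) :
    ∑ γ : Zkt t, chi ψ γ = if ψ = 0 then (2 ^ t : ℝ) else 0 := by
  split_ifs with h
  · subst h
    simp only [chi_zero_left, Finset.sum_const, Finset.card_univ, card_zkt, nsmul_eq_mul,
      mul_one]
    norm_num
  · exact sum_chi_ne ψ h

/-! ### Abstract simultaneous-eigenspace decomposition for `ℤ₂^t`-actions -/

section Eigen

variable {M : Type*} [AddCommGroup M] [Module ℝ M] {t : ℕ}

/-- The simultaneous eigenspace of the action `act` for the character `χ`. -/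
def eigenSub (act : Zkt t → M →ₗ[ℝ] M) (χ : Zkt t) : Submodule ℝ M where
  carrier := {u | ∀ γ, act γ u = chi χ γ • u}
  add_mem' := by
    intro a b ha hb γ
    simp only [map_add, ha γ, hb γ, smul_add]
  zero_mem' := by intro γ; simp
  smul_mem' := by
    intro r u hu γ
    rw [LinearMap.map_smul, hu γ, smul_comm]

lemma mem_eigenSub {act : Zkt t → M →ₗ[ℝ] M} {χ : Zkt t} {u : M} :
    u ∈ eigenSub act χ ↔ ∀ γ, act γ u = chi χ γ • u := Iff.rfl

/-- The projection onto the `χ`-eigenspace. -/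
noncomputable def eigenP (act : Zkt t → M →ₗ[ℝ] M) (χ : Zkt t) : M →ₗ[ℝ] M :=
  (2 ^ t : ℝ)⁻¹ • ∑ γ : Zkt t, chi χ γ • act γ

lemma eigenP_apply (act : Zkt t → M →ₗ[ℝ] M) (χ : Zkt t) (u : M) :
    eigenP act χ u = (2 ^ t : ℝ)⁻¹ • ∑ γ : Zkt t, chi χ γ • act γ u := by
  simp [eigenP, LinearMap.sum_apply]

lemma eigenP_mem (act : Zkt t → M →ₗ[ℝ] M)
    (hcomp : ∀ γ γ' (u : M), act γ (act γ' u) = act (γ + γ') u)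
    (χ : Zkt t) (u : M) : eigenP act χ u ∈ eigenSub act χ := by
  intro γ'
  rw [eigenP_apply, _root_.map_smul, map_sum]
  simp_rw [LinearMap.map_smul, hcomp]
  have reind : ∑ β : Zkt t, chi χ (γ' + β) • act (γ' + (γ' + β)) u
      = ∑ γ : Zkt t, chi χ γ • act (γ' + γ) u :=
    Fintype.sum_equiv (Equiv.addLeft γ') _ _ fun β => rfl
  rw [← reind]
  simp_rw [zmod2_add_add, chi_add_right, mul_smul, ← Finset.smul_sum]
  rw [smul_comm]

lemma eigenP_id (act : Zkt t → M →ₗ[ℝ] M) (χ : Zkt t) (u : M)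
    (hu : u ∈ eigenSub act χ) : eigenP act χ u = u := by
  rw [eigenP_apply]
  have key : ∀ γ : Zkt t, chi χ γ • act γ u = u := fun γ => by
    rw [hu γ, smul_smul, chi_mul_self, one_smul]
  simp_rw [key]
  rw [Finset.sum_const, Finset.card_univ, card_zkt, ← Nat.cast_smul_eq_nsmul ℝ, smul_smul]
  norm_num

lemma eigenP_ne (act : Zkt t → M →ₗ[ℝ] M) (χ ψ : Zkt t) (hne : χ ≠ ψ) (u : M)
    (hu : u ∈ eigenSub act ψ) : eigenP act χ u = 0 := by
  rw [eigenP_apply]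
  have key : ∀ γ : Zkt t, chi χ γ • act γ u = chi (χ + ψ) γ • u := fun γ => by
    rw [hu γ, smul_smul, ← chi_add_left]
  simp_rw [key, ← Finset.sum_smul, sum_chi]
  rw [if_neg, zero_smul, smul_zero]
  intro h
  exact hne (zmod2_eq_of_add_eq_zero h)

lemma eigenP_sum (act : Zkt t → M →ₗ[ℝ] M) (h0 : act 0 = LinearMap.id) (u : M) :
    ∑ χ : Zkt t, eigenP act χ u = u := by
  simp_rw [eigenP_apply]
  rw [← Finset.smul_sum, Finset.sum_comm]
  simp_rw [← Finset.sum_smul]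
  have key : ∀ γ : Zkt t, (∑ χ : Zkt t, chi χ γ) = if γ = 0 then (2 ^ t : ℝ) else 0 :=
    fun γ => by simp_rw [chi_comm _ γ]; exact sum_chi γ
  simp_rw [key, ite_smul, zero_smul]
  rw [Finset.sum_ite_eq' Finset.univ (0 : Zkt t) fun γ => (2 ^ t : ℝ) • act γ u]
  simp [h0, smul_smul]

lemma eigen_isInternal (act : Zkt t → M →ₗ[ℝ] M) (h0 : act 0 = LinearMap.id)
    (hcomp : ∀ γ γ' (u : M), act γ (act γ' u) = act (γ + γ') u) :
    DirectSum.IsInternal (eigenSub act) := by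
  rw [DirectSum.isInternal_submodule_iff_iSupIndep_and_iSup_eq_top]
  constructor
  · intro χ
    rw [disjoint_iff_inf_le]
    intro u hu
    rw [Submodule.mem_inf] at hu
    obtain ⟨hu1, hu2⟩ := hu
    have h1 : eigenP act χ u = u := eigenP_id _ _ _ hu1
    have h2 : eigenP act χ u = 0 := by
      have hle : (⨆ ψ, ⨆ _ : ψ ≠ χ, eigenSub act ψ) ≤ LinearMap.ker (eigenP act χ) := by
        refine iSup_le fun ψ => iSup_le fun hψ => ?_
        intro v hv
        exact LinearMap.mem_ker.mpr (eigenP_ne act χ ψ (Ne.symm hψ) v hv)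
      exact hle hu2
    rw [Submodule.mem_bot, ← h1, h2]
  · rw [eq_top_iff]
    intro u _
    rw [← eigenP_sum act h0 u]
    exact Submodule.sum_mem _ fun χ _ =>
      Submodule.mem_iSup_of_mem χ (eigenP_mem act hcomp χ u)

end Eigen

/-! ### Coefficient and direction lemmas -/

section Concrete

variable {VPH VHH : Type*} {t d : ℕ}

lemma coef_zero_right (e : ZMod 2) : coef e 0 = 0 := by simp [coef, zmod2_val_zero]

lemma coef_add (e g g' : ZMod 2) : coef e (g + g') = coef e g + coef (e + g) g' := by
  rcases zmod2_cases e with rfl | rfl <;> rcases zmod2_cases g with rfl | rfl <;>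
    rcases zmod2_cases g' with rfl | rfl <;>
    norm_num [coef, zmod2_val_zero, zmod2_val_one, zmod2_val_two]

lemma thetaP_fst (γ : Zkt t) (i : VPt VPH t) : (thetaP γ i).1 = i.1 := rfl
lemma thetaH_fst (γ : Zkt t) (j : VHt VHH t) : (thetaH γ j).1 = j.1 := rfl

lemma thetaP_thetaP (γ γ' : Zkt t) (i : VPt VPH t) :
    thetaP γ' (thetaP γ i) = thetaP (γ + γ') i := by
  simp [thetaP, add_assoc]

lemma thetaH_thetaH (γ γ' : Zkt t) (j : VHt VHH t) :
    thetaH γ' (thetaH γ j) = thetaH (γ + γ') j := by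
  simp [thetaH, add_assoc]

lemma thetaP_zero (i : VPt VPH t) : thetaP (0 : Zkt t) i = i := by simp [thetaP]
lemma thetaH_zero (j : VHt VHH t) : thetaH (0 : Zkt t) j = j := by simp [thetaH]

variable (F : Fin t → VHH → Prop) (τ : Fin t → Fin d → ℝ)

lemma tauP_zero (i : VPt VPH t) : tauP τ (0 : Zkt t) i = 0 := by
  simp [tauP, coef_zero_right]

lemma tauH_zero (j : VHt VHH t) : tauH F τ (0 : Zkt t) j = 0 := by
  simp [tauH, coef_zero_right]

lemma tauH_add (γ γ' : Zkt t) (j : VHt VHH t) :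
    tauH F τ (γ + γ') j = tauH F τ γ j + tauH F τ γ' (thetaH γ j) := by
  rw [tauH, tauH, tauH, ← Finset.sum_add_distrib]
  refine Finset.sum_congr rfl fun h _ => ?_
  by_cases hF : F h j.1
  · simp [hF, thetaH_fst]
  · simp only [hF, if_false, thetaH_fst, thetaH, Pi.add_apply]
    rw [coef_add, add_smul]

lemma tauP_eq_tauH (γ : Zkt t) (i : VPt VPH t) (j : VHt VHH t)
    (hF : ∀ h, ¬ F h j.1) (hlev : ∀ h, i.2 h = j.2 h) :
    tauP τ γ i = tauH F τ γ j :=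
  Finset.sum_congr rfl fun h _ => by simp [hF h, hlev h]

/-- `delta h₀` is the `h₀`-indicator element of `ℤ₂^t`. -/
def deltaZ (h₀ : Fin t) : Zkt t := fun h => if h = h₀ then 1 else 0

lemma tauP_delta (h₀ : Fin t) (i : VPt VPH t) :
    tauP τ (deltaZ h₀) i = coef (i.2 h₀) 1 • τ h₀ := by
  rw [tauP, Finset.sum_eq_single h₀]
  · simp [deltaZ]
  · intro h _ hne; simp [deltaZ, hne, coef_zero_right]
  · simp

lemma tauP_sub (γ : Zkt t) (i j : VPt VPH t) (h₀ : Fin t)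
    (heq : ∀ h, h ≠ h₀ → i.2 h = j.2 h) :
    tauP τ γ i - tauP τ γ j = (coef (i.2 h₀) (γ h₀) - coef (j.2 h₀) (γ h₀)) • τ h₀ := by
  rw [tauP, tauP, ← Finset.sum_sub_distrib, Finset.sum_eq_single h₀]
  · rw [← sub_smul]
  · intro h _ hne; rw [heq h hne, sub_self]
  · simp

/-! ### `intSign` and `sgn` lemmas -/

lemma intSign_self (γ e : Zkt t) : intSign γ e e = 1 := by
  unfold intSign
  refine Finset.prod_eq_one fun h _ => ?_
  rw [zmod2_add_self, zmod2_val_zero, zero_mul, pow_zero]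

lemma intSign_shift (γ γ' e e' : Zkt t) : intSign γ (e + γ') (e' + γ') = intSign γ e e' := by
  unfold intSign
  refine Finset.prod_congr rfl fun h _ => ?_
  have : (e + γ') h + (e' + γ') h = e h + e' h := zmod2_shift _ _ _
  rw [this]

lemma intSign_mul (γ γ' e e' : Zkt t) :
    intSign γ e e' * intSign γ' e e' = intSign (γ + γ') e e' := by
  unfold intSign
  rw [← Finset.prod_mul_distrib]
  refine Finset.prod_congr rfl fun h _ => ?_
  have : (γ + γ') h = γ h + γ' h := rfl
  rw [this]
  generalize e h + e' h = a
  rcases zmod2_cases a with rfl | rfl <;> rcases zmod2_cases (γ h) with h1 | h1 <;>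
    rcases zmod2_cases (γ' h) with h2 | h2 <;>
    rw [h1, h2] <;>
    norm_num [zmod2_val_zero, zmod2_val_one, zmod2_val_two]

lemma intSign_single (γ e f : Zkt t) (h₀ : Fin t) (hne : e h₀ ≠ f h₀)
    (heq : ∀ h, h ≠ h₀ → e h = f h) : intSign γ e f = (-1 : ℝ) ^ (γ h₀).val := by
  unfold intSign
  rw [Finset.prod_eq_single h₀]
  · rw [zmod2_ne_sum hne, zmod2_val_one, one_mul]
  · intro h _ hh
    rw [heq h hh, zmod2_add_self, zmod2_val_zero, zero_mul, pow_zero]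
  · simp

lemma sgn_shift (e g : ZMod 2) : (-1 : ℝ) ^ g.val * sgn (e + g) = sgn e := by
  rcases zmod2_cases e with rfl | rfl <;> rcases zmod2_cases g with rfl | rfl <;>
    norm_num [sgn, zmod2_val_zero, zmod2_val_one, zmod2_val_two]

lemma pp_scalar (e g : ZMod 2) :
    (-1 : ℝ) ^ g.val * (-(coef e 1) + (coef e g - coef (e + 1) g)) = -(coef e 1) := by
  rcases zmod2_cases e with rfl | rfl <;> rcases zmod2_cases g with rfl | rfl <;>
    norm_num [coef, zmod2_val_zero, zmod2_val_one, zmod2_val_two]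

/-! ### Adjacency invariance -/

lemma adjPP_shift (hPP : VPH → VPH → Prop) (γ : Zkt t) (i j : VPt VPH t) :
    AdjPP hPP (thetaP γ i) (thetaP γ j) ↔ AdjPP hPP i j := by
  unfold AdjPP thetaP
  simp only [ne_eq, Pi.add_apply, add_left_inj]

lemma adjPH_shift (hPH : VPH → VHH → Prop) (γ : Zkt t) (i : VPt VPH t) (j : VHt VHH t) :
    AdjPH F hPH (thetaP γ i) (thetaH γ j) ↔ AdjPH F hPH i j := by
  unfold AdjPH thetaP thetaH
  simp only [Pi.add_apply, add_left_inj]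

lemma adjHHn_shift (hHH : VHH → VHH → Prop) (γ : Zkt t) (j k : VHt VHH t) :
    AdjHHn F hHH (thetaH γ j) (thetaH γ k) ↔ AdjHHn F hHH j k := by
  unfold AdjHHn thetaH
  simp only [Pi.add_apply, add_left_inj]

lemma adjHHp_shift (γ : Zkt t) (j k : VHt VHH t) :
    AdjHHp F (thetaH γ j) (thetaH γ k) ↔ AdjHHp F j k := by
  unfold AdjHHp thetaH
  simp only [ne_eq, Pi.add_apply, add_left_inj]

end Concrete

/-! ### The external and internal representations as linear maps -/

section Actions

variable {VPH VHH : Type*} {t d : ℕ}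
variable (F : Fin t → VHH → Prop) (τ : Fin t → Fin d → ℝ)

/-- The external representation packaged as a linear map. -/
noncomputable def actCfg (γ : Zkt t) :
    PHCfg d (VPt VPH t) (VHt VHH t) →ₗ[ℝ] PHCfg d (VPt VPH t) (VHt VHH t) where
  toFun := extActP F τ γ
  map_add' q q' := by
    unfold extActP
    refine Prod.ext rfl ?_
    funext j
    show ((q.2 (thetaH γ j)).1 + (q'.2 (thetaH γ j)).1,
        ((q.2 (thetaH γ j)).2 + (q'.2 (thetaH γ j)).2)
          - tauH F τ γ j ⬝ᵥ ((q.2 (thetaH γ j)).1 + (q'.2 (thetaH γ j)).1))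
      = ((q.2 (thetaH γ j)).1 + (q'.2 (thetaH γ j)).1,
        ((q.2 (thetaH γ j)).2 - tauH F τ γ j ⬝ᵥ (q.2 (thetaH γ j)).1)
          + ((q'.2 (thetaH γ j)).2 - tauH F τ γ j ⬝ᵥ (q'.2 (thetaH γ j)).1))
    simp only [Prod.mk.injEq, true_and]
    rw [dotProduct_add]
    ring
  map_smul' a q := by
    unfold extActP
    refine Prod.ext rfl ?_
    funext j
    show (a • (q.2 (thetaH γ j)).1,
        a • (q.2 (thetaH γ j)).2 - tauH F τ γ j ⬝ᵥ (a • (q.2 (thetaH γ j)).1))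
      = (a • (q.2 (thetaH γ j)).1,
        a • ((q.2 (thetaH γ j)).2 - tauH F τ γ j ⬝ᵥ (q.2 (thetaH γ j)).1))
    simp only [Prod.mk.injEq, true_and]
    rw [dotProduct_smul]
    simp only [smul_eq_mul]
    ring

lemma actCfg_apply (γ : Zkt t) (q : PHCfg d (VPt VPH t) (VHt VHH t)) :
    actCfg F τ γ q = extActP F τ γ q := rfl

lemma actCfg_zero : actCfg (VPH := VPH) (VHH := VHH) (d := d) F τ 0 = LinearMap.id := by
  refine LinearMap.ext fun q => ?_
  rw [actCfg_apply]
  unfold extActP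
  refine Prod.ext ?_ ?_
  · funext i
    show q.1 (thetaP 0 i) = q.1 i
    rw [thetaP_zero]
  · funext j
    show ((q.2 (thetaH 0 j)).1, (q.2 (thetaH 0 j)).2 - tauH F τ 0 j ⬝ᵥ (q.2 (thetaH 0 j)).1)
      = q.2 j
    rw [thetaH_zero, tauH_zero, zero_dotProduct, sub_zero]

lemma actCfg_comp (γ γ' : Zkt t) (q : PHCfg d (VPt VPH t) (VHt VHH t)) :
    actCfg F τ γ (actCfg F τ γ' q) = actCfg F τ (γ + γ') q := by
  simp only [actCfg_apply]
  unfold extActP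
  refine Prod.ext ?_ ?_
  · funext i
    show q.1 (thetaP γ' (thetaP γ i)) = q.1 (thetaP (γ + γ') i)
    rw [thetaP_thetaP]
  · funext j
    show ((q.2 (thetaH γ' (thetaH γ j))).1,
        ((q.2 (thetaH γ' (thetaH γ j))).2
            - tauH F τ γ' (thetaH γ j) ⬝ᵥ (q.2 (thetaH γ' (thetaH γ j))).1)
          - tauH F τ γ j ⬝ᵥ (q.2 (thetaH γ' (thetaH γ j))).1)
      = ((q.2 (thetaH (γ + γ') j)).1,
        (q.2 (thetaH (γ + γ') j)).2 - tauH F τ (γ + γ') j ⬝ᵥ (q.2 (thetaH (γ + γ') j)).1)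
    rw [thetaH_thetaH, tauH_add F τ γ γ' j, add_dotProduct]
    simp only [Prod.mk.injEq, true_and]
    ring

/-- The internal representation packaged as a linear map. -/
noncomputable def actRow (γ : Zkt t) :
    (PRow (VPt VPH t) (VHt VHH t) d → ℝ) →ₗ[ℝ] (PRow (VPt VPH t) (VHt VHH t) d → ℝ) where
  toFun s := fun row => rowSign γ row * s (rowMap γ row)
  map_add' s s' := by funext row; simp [mul_add]
  map_smul' a s := by funext row; simp [smul_eq_mul]; ring

lemma actRow_apply (γ : Zkt t) (s : PRow (VPt VPH t) (VHt VHH t) d → ℝ) :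
    actRow (VPH := VPH) (VHH := VHH) γ s = fun row => rowSign γ row * s (rowMap γ row) := rfl

lemma rowMap_zero (row : PRow (VPt VPH t) (VHt VHH t) d) : rowMap (0 : Zkt t) row = row := by
  rcases row with ⟨i, j⟩ | ⟨i, j⟩ | ⟨j, k⟩ | ⟨⟨j, k⟩, m⟩ | j <;>
    simp [rowMap, thetaP_zero, thetaH_zero]

lemma intSign_zero (e e' : Zkt t) : intSign (0 : Zkt t) e e' = 1 := by
  unfold intSign
  refine Finset.prod_eq_one fun h _ => ?_
  rw [show ((0 : Zkt t) h) = 0 from rfl, zmod2_val_zero, mul_zero, pow_zero]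

lemma rowSign_zero (row : PRow (VPt VPH t) (VHt VHH t) d) : rowSign (0 : Zkt t) row = 1 := by
  rcases row with ⟨i, j⟩ | ⟨i, j⟩ | ⟨j, k⟩ | ⟨⟨j, k⟩, m⟩ | j <;>
    simp [rowSign, intSign_zero]

lemma actRow_zero : actRow (VPH := VPH) (VHH := VHH) (t := t) (d := d) 0 = LinearMap.id := by
  refine LinearMap.ext fun s => ?_
  funext row
  rw [actRow_apply]
  simp [rowSign_zero, rowMap_zero]

lemma rowMap_comp (γ γ' : Zkt t) (row : PRow (VPt VPH t) (VHt VHH t) d) :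
    rowMap γ' (rowMap γ row) = rowMap (γ + γ') row := by
  rcases row with ⟨i, j⟩ | ⟨i, j⟩ | ⟨j, k⟩ | ⟨⟨j, k⟩, m⟩ | j <;>
    simp [rowMap, thetaP_thetaP, thetaH_thetaH]

lemma rowSign_comp (γ γ' : Zkt t) (row : PRow (VPt VPH t) (VHt VHH t) d) :
    rowSign γ row * rowSign γ' (rowMap γ row) = rowSign (γ + γ') row := by
  rcases row with ⟨i, j⟩ | ⟨i, j⟩ | ⟨j, k⟩ | ⟨⟨j, k⟩, m⟩ | j <;>
    simp only [rowSign, rowMap, mul_one, thetaP, thetaH]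
  · rw [intSign_shift, intSign_mul]
  · rw [intSign_shift, intSign_mul]

lemma actRow_comp (γ γ' : Zkt t) (s : PRow (VPt VPH t) (VHt VHH t) d → ℝ) :
    actRow γ (actRow γ' s) = actRow (γ + γ') s := by
  funext row
  show rowSign γ row * (rowSign γ' (rowMap γ row) * s (rowMap γ' (rowMap γ row)))
      = rowSign (γ + γ') row * s (rowMap (γ + γ') row)
  rw [← mul_assoc, rowSign_comp, rowMap_comp]

end Actions

/-! ### Intertwining of the rigidity matrix -/

section Intertwine

variable {VPH VHH : Type*} {t d : ℕ}
variable (F : Fin t → VHH → Prop) (τ : Fin t → Fin d → ℝ)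
variable (hPP : VPH → VPH → Prop) (hPH : VPH → VHH → Prop) (hHH : VHH → VHH → Prop)
variable (alph : VHH → Fin t → Fin (d - 1) → Fin d → ℝ)
variable (c : PHCfg d (VPt VPH t) (VHt VHH t))

lemma key_PP (hp : ∀ (γ : Zkt t) (i : VPt VPH t), c.1 (thetaP γ i) = c.1 i + tauP τ γ i)
    (γ : Zkt t) (i j : VPt VPH t) (hA : AdjPP hPP i j) :
    intSign γ i.2 j.2 • (c.1 (thetaP γ i) - c.1 (thetaP γ j)) = c.1 i - c.1 j := by
  rw [hp γ i, hp γ j,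
    show c.1 i + tauP τ γ i - (c.1 j + tauP τ γ j)
      = (c.1 i - c.1 j) + (tauP τ γ i - tauP τ γ j) by abel]
  rcases hA with ⟨-, h2⟩ | ⟨h1, h₀, hne, heq⟩
  · have ht : tauP τ γ i = tauP τ γ j := by unfold tauP; simp only [h2]
    rw [ht, sub_self, add_zero, h2, intSign_self, one_smul]
  · have hj : j = thetaP (deltaZ h₀) i := by
      refine Prod.ext h1.symm ?_
      funext h
      show j.2 h = i.2 h + deltaZ h₀ h
      by_cases hh : h = h₀
      · subst hh; rw [deltaZ, if_pos rfl]; exact zmod2_ne_eq_add_one hne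
      · rw [deltaZ, if_neg hh, add_zero]; exact (heq h hh).symm
    have hcj : c.1 j = c.1 i + coef (i.2 h₀) 1 • τ h₀ := by
      conv_lhs => rw [hj]
      rw [hp (deltaZ h₀) i, tauP_delta]
    have hsub : tauP τ γ i - tauP τ γ j
        = (coef (i.2 h₀) (γ h₀) - coef (j.2 h₀) (γ h₀)) • τ h₀ :=
      tauP_sub τ γ i j h₀ heq
    have hIS : intSign γ i.2 j.2 = (-1 : ℝ) ^ (γ h₀).val :=
      intSign_single γ i.2 j.2 h₀ hne heq
    have hj2 : j.2 h₀ = i.2 h₀ + 1 := zmod2_ne_eq_add_one hne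
    rw [hIS, hsub, hcj, hj2,
      show c.1 i - (c.1 i + coef (i.2 h₀) 1 • τ h₀) = (-(coef (i.2 h₀) 1)) • τ h₀ by
        rw [neg_smul]; abel,
      ← add_smul, smul_smul, pp_scalar]

lemma intertwine
    (hp : ∀ (γ : Zkt t) (i : VPt VPH t), c.1 (thetaP γ i) = c.1 i + tauP τ γ i)
    (hn : ∀ (γ : Zkt t) (j : VHt VHH t), (c.2 (thetaH γ j)).1 = (c.2 j).1)
    (hnoPH : ∀ (i : VPt VPH t) (j : VHt VHH t), AdjPH F hPH i j → ∀ h, ¬ F h j.1)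
    (γ : Zkt t) (q : PHCfg d (VPt VPH t) (VHt VHH t))
    (row : PRow (VPt VPH t) (VHt VHH t) d) :
    rowSign γ row * phRigX F hPP hPH hHH alph c q (rowMap γ row)
      = phRigX F hPP hPH hHH alph c (extActP F τ γ q) row := by
  rcases row with ⟨i, j⟩ | ⟨i, j⟩ | ⟨j, k⟩ | ⟨⟨j, k⟩, m⟩ | j
  · -- point-point rows
    simp only [rowSign, rowMap, phRigX, extActP]
    rw [adjPP_shift]
    by_cases hA : AdjPP hPP i j
    · rw [if_pos hA, if_pos hA, ← smul_eq_mul, ← smul_dotProduct,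
        key_PP τ hPP c hp γ i j hA]
    · rw [if_neg hA, if_neg hA, mul_zero]
  · -- point-hyperplane rows
    simp only [rowSign, rowMap, phRigX, extActP, one_mul]
    rw [adjPH_shift]
    by_cases hA : AdjPH F hPH i j
    · rw [if_pos hA, if_pos hA]
      have htau : tauP τ γ i = tauH F τ γ j :=
        tauP_eq_tauH F τ γ i j (hnoPH i j hA) (fun h => hA.2 h (hnoPH i j hA h))
      rw [hn γ j, hp γ i, add_dotProduct, htau]
      ring
    · rw [if_neg hA, if_neg hA]
  · -- hyperplane-hyperplane angle rows
    simp only [rowSign, rowMap, phRigX, extActP, one_mul]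
    rw [adjHHn_shift]
    by_cases hA : AdjHHn F hHH j k
    · rw [if_pos hA, if_pos hA, hn γ j, hn γ k]
    · rw [if_neg hA, if_neg hA]
  · -- parallel rows
    simp only [rowSign, rowMap, phRigX, extActP]
    rw [adjHHp_shift]
    by_cases hA : AdjHHp F j k
    · rw [if_pos hA, if_pos hA]
      obtain ⟨hjk, h₀, hF₀, hne, heq⟩ := hA
      rw [Finset.sum_eq_single h₀, Finset.sum_eq_single h₀]
      · have hIS : intSign γ j.2 k.2 = (-1 : ℝ) ^ (γ h₀).val :=
          intSign_single γ j.2 k.2 h₀ hne heq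
        have hcondL : ¬ F h₀ (thetaH γ j).1 ∧ (thetaH γ j).2 h₀ ≠ (thetaH γ k).2 h₀ := by
          refine ⟨hF₀, fun hc => hne ?_⟩
          have : j.2 h₀ + γ h₀ = k.2 h₀ + γ h₀ := hc
          exact add_right_cancel this
        have hcondR : ¬ F h₀ j.1 ∧ j.2 h₀ ≠ k.2 h₀ := ⟨hF₀, hne⟩
        rw [if_pos hcondL, if_pos hcondR, hIS]
        have s1 := sgn_shift (j.2 h₀) (γ h₀)
        have s2 := sgn_shift (k.2 h₀) (γ h₀)
        show (-1 : ℝ) ^ (γ h₀).val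
            * (sgn (j.2 h₀ + γ h₀) * (alph j.1 h₀ m ⬝ᵥ (q.2 (thetaH γ j)).1)
              + sgn (k.2 h₀ + γ h₀) * (alph j.1 h₀ m ⬝ᵥ (q.2 (thetaH γ k)).1))
          = sgn (j.2 h₀) * (alph j.1 h₀ m ⬝ᵥ (q.2 (thetaH γ j)).1)
              + sgn (k.2 h₀) * (alph j.1 h₀ m ⬝ᵥ (q.2 (thetaH γ k)).1)
        linear_combination (alph j.1 h₀ m ⬝ᵥ (q.2 (thetaH γ j)).1) * s1
          + (alph j.1 h₀ m ⬝ᵥ (q.2 (thetaH γ k)).1) * s2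
      · intro b _ hb
        refine if_neg fun hc => hc.2 ?_
        rw [heq b hb]
      · intro hb; exact absurd (Finset.mem_univ h₀) hb
      · intro b _ hb
        refine if_neg fun hc => hc.2 ?_
        show j.2 b + γ b = k.2 b + γ b
        rw [heq b hb]
      · intro hb; exact absurd (Finset.mem_univ h₀) hb
    · rw [if_neg hA, if_neg hA, mul_zero]
  · -- normalisation rows
    simp only [rowSign, rowMap, phRigX, extActP, one_mul]
    rw [hn γ j]

lemma phRigX_smul (a : ℝ) (q : PHCfg d (VPt VPH t) (VHt VHH t))
    (row : PRow (VPt VPH t) (VHt VHH t) d) :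
    phRigX F hPP hPH hHH alph c (a • q) row = a * phRigX F hPP hPH hHH alph c q row := by
  rcases row with ⟨i, j⟩ | ⟨i, j⟩ | ⟨j, k⟩ | ⟨⟨j, k⟩, m⟩ | j <;>
    simp only [phRigX, Prod.smul_fst, Prod.smul_snd, Pi.smul_apply, smul_eq_mul]
  · split_ifs with hA
    · rw [show a • q.1 i - a • q.1 j = a • (q.1 i - q.1 j) by rw [smul_sub],
        dotProduct_smul, smul_eq_mul]
    · ring
  · split_ifs with hA
    · rw [dotProduct_smul, smul_dotProduct, smul_eq_mul, smul_eq_mul]; ring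
    · ring
  · split_ifs with hA
    · rw [dotProduct_smul, smul_dotProduct, smul_eq_mul, smul_eq_mul]; ring
    · ring
  · split_ifs with hA
    · rw [Finset.mul_sum]
      refine Finset.sum_congr rfl fun h _ => ?_
      split_ifs with hc
      · rw [dotProduct_smul, dotProduct_smul, smul_eq_mul, smul_eq_mul]; ring
      · ring
    · ring
  · rw [dotProduct_smul, smul_eq_mul]

end Intertwine

/-- **Corollary 3.3**: block-decomposition of the point-hyperplane rigidity matrix of a
`t`-fold extrusion-symmetric framework. -/
theorem ph_rigidity_block_decomposition
    {VPH VHH : Type*} [Fintype VPH] [Fintype VHH] {t d : ℕ}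
    (F : Fin t → VHH → Prop) (τ : Fin t → Fin d → ℝ)
    (hPP : VPH → VPH → Prop) (hPPsymm : ∀ u v, hPP u v → hPP v u)
    (hPH : VPH → VHH → Prop)
    (hHH : VHH → VHH → Prop) (hHHsymm : ∀ u v, hHH u v → hHH v u)
    (alph : VHH → Fin t → Fin (d - 1) → Fin d → ℝ)
    (c : PHCfg d (VPt VPH t) (VHt VHH t))
    (hext : PHExtrusion F τ c)
    (hnoPH : ∀ (i : VPt VPH t) (j : VHt VHH t), AdjPH F hPH i j → ∀ h, ¬ F h j.1) :
    ∃ (X : Zkt t → Submodule ℝ (PHCfg d (VPt VPH t) (VHt VHH t)))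
      (Y : Zkt t → Submodule ℝ (PRow (VPt VPH t) (VHt VHH t) d → ℝ)),
      DirectSum.IsInternal X ∧ DirectSum.IsInternal Y ∧
      (∀ χ, ∀ u ∈ X χ, ∀ γ, extActP F τ γ u = chi χ γ • u) ∧
      (∀ χ, ∀ s ∈ Y χ, ∀ γ,
        (fun row => rowSign γ row * s (rowMap γ row)) = chi χ γ • s) ∧
      (∀ χ, ∀ u ∈ X χ,
        (fun row => phRigX F hPP hPH hHH alph c u row) ∈ Y χ) := by

  obtain ⟨-, hp, hn, -, hr⟩ := hext
  refine ⟨eigenSub (actCfg F τ), eigenSub (actRow (VPH := VPH) (VHH := VHH) (t := t) (d := d)),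
    ?_, ?_, ?_, ?_, ?_⟩
  · exact eigen_isInternal _ (actCfg_zero F τ) (actCfg_comp F τ)
  · exact eigen_isInternal _ actRow_zero actRow_comp
  · intro χ u hu γ
    exact hu γ
  · intro χ s hs γ
    exact hs γ
  · intro χ u hu
    intro γ
    funext row
    have hγ : extActP F τ γ u = chi χ γ • u := hu γ
    show rowSign γ row * phRigX F hPP hPH hHH alph c u (rowMap γ row)
      = chi χ γ * phRigX F hPP hPH hHH alph c u row
    rw [intertwine F τ hPP hPH hHH alph c hp hn hnoPH γ u row, hγ,
      phRigX_smul F hPP hPH hHH alph c]
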